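/- Let p ≥ 1. Starting from u₀, let u_j = q(u_{j−1}) for j = 1, …, p−1, and let u_p be produced by a single NGMRES(p−1) step from u₀, …, u_{p−1}. Then u_p is the p-th full GMRES iterate from u₀; that is, u_p ∈ u₀ + K_p(A, r₀) and ‖A u_p − b‖ = min{‖A u − b‖ : u ∈ u₀ + K_p(A, r₀)}. -/

import Mathlib

/-!
With `M = I - A`, Richardson steps multiply residuals by `M`, so `r(u_j) = M^j r₀` and the
consecutive differences `u_{j+1} - u_j = -M^j r₀` span `K_p(M, r₀) = K_p(A, r₀)`; by
telescoping so do the differences `q(u_{p-1}) - u_j`. Hence the NGMRES candidates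
`q(u_{p-1}) + Σ β_i (q(u_{p-1}) - u_{p-1-i})` are exactly the points of `u₀ + K_p(A, r₀)`
(the coefficient of `u₀` absorbs the offset `q(u_{p-1}) - u₀`). Since `r` is affine, the
NGMRES objective is the residual norm of the candidate, so minimizing it over `β` is
minimizing `‖r‖` over `u₀ + K_p(A, r₀)`.
-/

open Matrix Polynomial Set

noncomputable section

/-- Matrix–vector product, landing in Euclidean space. -/
def mulVecE {n : ℕ} (M : Matrix (Fin n) (Fin n) ℝ) (v : EuclideanSpace ℝ (Fin n)) :
    EuclideanSpace ℝ (Fin n) :=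
  WithLp.toLp 2 (M.mulVec v)

/-- Residual `r(u) = A u - b`. -/
def res {n : ℕ} (A : Matrix (Fin n) (Fin n) ℝ) (b u : EuclideanSpace ℝ (Fin n)) :
    EuclideanSpace ℝ (Fin n) :=
  mulVecE A u - b

/-- Richardson fixed-point map `q(u) = (I - A) u + b = M u + b` with `M = I - A`. -/
def fp {n : ℕ} (A : Matrix (Fin n) (Fin n) ℝ) (b u : EuclideanSpace ℝ (Fin n)) :
    EuclideanSpace ℝ (Fin n) :=
  mulVecE (1 - A) u + b

/-- The NGMRES(m) least-squares objective at step `k`: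
`β ↦ ‖r(q(u_k)) + Σ_{i=0}^m β_i (r(q(u_k)) - r(u_{k-i}))‖`. -/
def ngObj {n : ℕ} (A : Matrix (Fin n) (Fin n) ℝ) (b : EuclideanSpace ℝ (Fin n))
    (m : ℕ) (prev : ℕ → EuclideanSpace ℝ (Fin n)) (k : ℕ) (β : Fin (m+1) → ℝ) : ℝ :=
  ‖res A b (fp A b (prev k)) +
    ∑ i : Fin (m+1), β i • (res A b (fp A b (prev k)) - res A b (prev (k - (i : ℕ))))‖

/-- `next` is produced from `prev (k-m), …, prev k` by a single NGMRES(m) step: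
`next = q(u_k) + Σ_{i=0}^m β_i (q(u_k) - u_{k-i})` where `β` minimizes the
least-squares objective `ngObj`. -/
def NGMRESStep {n : ℕ} (A : Matrix (Fin n) (Fin n) ℝ) (b : EuclideanSpace ℝ (Fin n))
    (m : ℕ) (prev : ℕ → EuclideanSpace ℝ (Fin n)) (k : ℕ)
    (next : EuclideanSpace ℝ (Fin n)) : Prop :=
  ∃ β : Fin (m+1) → ℝ,
    (∀ γ : Fin (m+1) → ℝ, ngObj A b m prev k β ≤ ngObj A b m prev k γ) ∧
    next = fp A b (prev k) +
      ∑ i : Fin (m+1), β i • (fp A b (prev k) - prev (k - (i : ℕ)))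

/-- The spectral (ℓ²-operator) norm of a matrix. -/
def opNorm {n : ℕ} (M : Matrix (Fin n) (Fin n) ℝ) : ℝ :=
  ‖(Matrix.toEuclideanCLM (𝕜 := ℝ) M : EuclideanSpace ℝ (Fin n) →L[ℝ] EuclideanSpace ℝ (Fin n))‖

/-- The 2-norm condition number `κ₂(U) = ‖U‖ ‖U⁻¹‖`. -/
def condNum {n : ℕ} (U : Matrix (Fin n) (Fin n) ℝ) : ℝ :=
  opNorm U * opNorm U⁻¹

/-- `ε(a,b,s)`: minimum over real polynomials `p` of degree at most `s` with `p(1) = 1`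
of `max_{t ∈ [1/b, 1/a]} |p(t)|`. -/
def eps (a b : ℝ) (s : ℕ) : ℝ :=
  sInf {t : ℝ | ∃ p : Polynomial ℝ, p.natDegree ≤ s ∧ p.eval 1 = 1 ∧
    t = sSup ((fun x => |p.eval x|) '' Set.Icc (1/b) (1/a))}

/-- `χ(s)`: minimum over real polynomials `p` of degree at most `s` with `p(1) = 1`
of `max_{λ ∈ Σ(M)} |p(λ)|`, where `Σ(M)` is the set of eigenvalues of `M`. -/
def chiSp {n : ℕ} (M : Matrix (Fin n) (Fin n) ℝ) (s : ℕ) : ℝ :=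
  sInf {t : ℝ | ∃ p : Polynomial ℝ, p.natDegree ≤ s ∧ p.eval 1 = 1 ∧
    t = sSup ((fun x => |p.eval x|) '' spectrum ℝ M)}

/-- The Krylov subspace `K_k(A, r) = span{r, Ar, …, A^{k-1} r}`. -/
def Krylov {n : ℕ} (A : Matrix (Fin n) (Fin n) ℝ) (r : EuclideanSpace ℝ (Fin n)) (k : ℕ) :
    Submodule ℝ (EuclideanSpace ℝ (Fin n)) :=
  Submodule.span ℝ (Set.range fun i : Fin k => mulVecE (A ^ (i : ℕ)) r)

/-- The matrix `S_k = [u_{k-m+1}-u_{k-m}, …, u_k-u_{k-1}, q(u_k)-u_k] ∈ ℝ^{n×(m+1)}`. -/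
def Smat {n : ℕ} (A : Matrix (Fin n) (Fin n) ℝ) (b : EuclideanSpace ℝ (Fin n))
    (prev : ℕ → EuclideanSpace ℝ (Fin n)) (k m : ℕ) :
    Matrix (Fin n) (Fin (m+1)) ℝ :=
  Matrix.of fun r c =>
    if (c : ℕ) < m then prev (k - m + c + 1) r - prev (k - m + c) r
    else fp A b (prev k) r - prev k r

/-- `u` is the sequence of aNGMRES(m, p) iterates (with `m = ⊤` giving aNGMRES(∞, p)):
if `p ∤ k` then `u_k = q(u_{k-1})`, and if `p ∣ k` then `u_k` is produced by one
NGMRES(min(m, k-1)) step from `u_{k-1-m_k}, …, u_{k-1}`. -/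
def aNGMRES {n : ℕ} (A : Matrix (Fin n) (Fin n) ℝ) (b : EuclideanSpace ℝ (Fin n))
    (m : ℕ∞) (p : ℕ) (u : ℕ → EuclideanSpace ℝ (Fin n)) : Prop :=
  ∀ k, 1 ≤ k →
    (¬ p ∣ k → u k = fp A b (u (k-1))) ∧
    (p ∣ k → NGMRESStep A b (min m ((k : ℕ∞) - 1)).toNat u (k-1) (u k))

section Span

variable {R S E : Type*} [Ring R] [AddCommGroup E] [Module R E]

theorem span_range_sub_eq_span_range_succ_sub (y : ℕ → E) (k : ℕ) :
    Submodule.span R (range fun j : Fin k => y k - y j) =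
      Submodule.span R (range fun j : Fin k => y (j + 1) - y j) := by
  apply le_antisymm <;> rw [Submodule.span_le, range_subset_iff] <;> intro j
  · rw [← Finset.sum_Ico_sub _ j.is_lt.le]
    exact Submodule.sum_mem _ fun i hi =>
      Submodule.subset_span (mem_range_self (⟨i, (Finset.mem_Ico.mp hi).2⟩ : Fin k))
  · rw [← sub_sub_sub_cancel_left _ _ (y k)]
    refine sub_mem (Submodule.subset_span (mem_range_self j)) ?_
    rcases (show (j : ℕ) + 1 ≤ k from j.is_lt).eq_or_lt with h | h
    · rw [h, sub_self]; exact zero_mem _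
    · exact Submodule.subset_span (mem_range_self (⟨j + 1, h⟩ : Fin k))

theorem span_range_one_sub_pow_smul_le [Ring S] [Module S E] (a : S) (v : E) (k : ℕ) :
    Submodule.span R (range fun i : Fin k => (1 - a) ^ (i : ℕ) • v) ≤
      Submodule.span R (range fun i : Fin k => a ^ (i : ℕ) • v) := by
  rw [Submodule.span_le, range_subset_iff]
  intro i
  rw [sub_eq_neg_add, (Commute.one_right (-a)).add_pow, Finset.sum_smul]
  refine Submodule.sum_mem _ fun j hj => ?_
  have hjk : j < k := (Finset.mem_range_succ_iff.mp hj).trans_lt i.is_lt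
  rw [one_pow, mul_one, mul_smul, Nat.cast_smul_eq_nsmul, smul_comm, neg_pow, mul_smul]
  refine Submodule.smul_of_tower_mem _ _ ?_
  have hmem : a ^ j • v ∈ Submodule.span R (range fun i : Fin k => a ^ (i : ℕ) • v) :=
    Submodule.subset_span ⟨⟨j, hjk⟩, rfl⟩
  rcases neg_one_pow_eq_or S j with h | h <;> rw [h]
  · rwa [one_smul]
  · rw [neg_one_smul]; exact neg_mem hmem

theorem span_range_one_sub_pow_smul [Ring S] [Module S E] (a : S) (v : E) (k : ℕ) :
    Submodule.span R (range fun i : Fin k => (1 - a) ^ (i : ℕ) • v) =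
      Submodule.span R (range fun i : Fin k => a ^ (i : ℕ) • v) := by
  refine le_antisymm (span_range_one_sub_pow_smul_le a v k) ?_
  simpa only [sub_sub_cancel] using span_range_one_sub_pow_smul_le (R := R) (1 - a) v k

theorem mem_span_range_sub_iff {ι : Type*} [Fintype ι] [DecidableEq ι] (x : E) (y : ι → E)
    (j : ι) (w : E) :
    w ∈ Submodule.span R (range fun i => x - y i) ↔
      ∃ β : ι → R, y j + w = x + ∑ i, β i • (x - y i) := by
  constructor
  · intro hw
    obtain ⟨c, hc⟩ := Submodule.mem_span_range_iff_exists_fun R |>.mp hw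
    refine ⟨c - Pi.single j 1, ?_⟩
    simp only [Pi.sub_apply, sub_smul, Finset.sum_sub_distrib, hc, Pi.single_apply, ite_smul,
      one_smul, zero_smul, Finset.sum_ite_eq', Finset.mem_univ, if_true]
    abel
  · rintro ⟨β, hβ⟩
    rw [← add_sub_cancel_left (y j) w, hβ, add_sub_right_comm]
    refine add_mem (Submodule.subset_span (mem_range_self j)) (Submodule.sum_mem _ fun i _ => ?_)
    exact Submodule.smul_mem _ _ (Submodule.subset_span (mem_range_self i))

end Span

section Richardson

variable {n : ℕ} (A : Matrix (Fin n) (Fin n) ℝ) (b : EuclideanSpace ℝ (Fin n))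

theorem mulVecE_eq_toEuclideanCLM (M : Matrix (Fin n) (Fin n) ℝ) (v : EuclideanSpace ℝ (Fin n)) :
    mulVecE M v = Matrix.toEuclideanCLM (𝕜 := ℝ) M v :=
  rfl

theorem res_add_sum_smul_sub {ι : Type*} [Fintype ι] (β : ι → ℝ) (x : EuclideanSpace ℝ (Fin n))
    (y : ι → EuclideanSpace ℝ (Fin n)) :
    res A b (x + ∑ i, β i • (x - y i)) = res A b x + ∑ i, β i • (res A b x - res A b (y i)) := by
  simp only [res, mulVecE_eq_toEuclideanCLM, map_add, map_sum, map_smul, map_sub,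
    sub_sub_sub_cancel_right]
  abel

theorem fp_sub_self (v : EuclideanSpace ℝ (Fin n)) : fp A b v - v = -res A b v := by
  simp only [fp, res, mulVecE_eq_toEuclideanCLM, map_sub, map_one, _root_.sub_apply,
    one_apply_eq_self]
  abel

theorem mulVecE_mul (M N : Matrix (Fin n) (Fin n) ℝ) (v : EuclideanSpace ℝ (Fin n)) :
    mulVecE (M * N) v = mulVecE M (mulVecE N v) := by
  simp only [mulVecE, Matrix.mulVec_mulVec]

theorem res_fp (v : EuclideanSpace ℝ (Fin n)) :
    res A b (fp A b v) = mulVecE (1 - A) (res A b v) := by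
  simp only [fp, res, mulVecE_eq_toEuclideanCLM, map_sub, map_add, map_one,
    _root_.sub_apply, one_apply_eq_self]
  abel

theorem res_iterate_fp (v : EuclideanSpace ℝ (Fin n)) (j : ℕ) :
    res A b ((fp A b)^[j] v) = mulVecE ((1 - A) ^ j) (res A b v) := by
  induction j with
  | zero => simp [mulVecE]
  | succ j ih => rw [Function.iterate_succ_apply', res_fp, ih, pow_succ', mulVecE_mul]

theorem span_range_iterate_fp_sub (v : EuclideanSpace ℝ (Fin n)) (k : ℕ) :
    Submodule.span ℝ (range fun j : Fin k => (fp A b)^[k] v - (fp A b)^[j] v) =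
      Krylov A (res A b v) k := by
  set T := Matrix.toEuclideanCLM (𝕜 := ℝ) A
  calc Submodule.span ℝ (range fun j : Fin k => (fp A b)^[k] v - (fp A b)^[j] v)
      = Submodule.span ℝ (-range fun j : Fin k => (1 - T) ^ (j : ℕ) • res A b v) := by
        rw [span_range_sub_eq_span_range_succ_sub (fun j => (fp A b)^[j] v), neg_range]
        congr! 3 with j
        rw [Function.iterate_succ_apply', fp_sub_self, res_iterate_fp, mulVecE_eq_toEuclideanCLM,
          map_pow, map_sub, map_one]
        rfl
    _ = Submodule.span ℝ (range fun j : Fin k => T ^ (j : ℕ) • res A b v) := by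
        rw [Submodule.span_neg, span_range_one_sub_pow_smul]
    _ = Krylov A (res A b v) k := by
        simp only [Krylov, mulVecE_eq_toEuclideanCLM, map_pow, T]
        rfl

end Richardson

theorem eq_iterate_of_forall_lt {α : Type*} (f : α → α) (u : ℕ → α) (m : ℕ)
    (h : ∀ j < m, u (j + 1) = f (u j)) : ∀ j ≤ m, u j = f^[j] (u 0) := by
  intro j hj
  induction j with
  | zero => rfl
  | succ j ih => rw [h j hj, ih (Nat.le_of_succ_le hj), Function.iterate_succ_apply']

theorem stmt_9_general {n p : ℕ} (hp : 1 ≤ p) (A : Matrix (Fin n) (Fin n) ℝ)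
    (b : EuclideanSpace ℝ (Fin n)) (u : ℕ → EuclideanSpace ℝ (Fin n))
    (hfp : ∀ j, 1 ≤ j → j ≤ p - 1 → u j = fp A b (u (j-1)))
    (next : EuclideanSpace ℝ (Fin n)) (hstep : NGMRESStep A b (p-1) u (p-1) next) :
    (next - u 0) ∈ Krylov A (res A b (u 0)) p ∧
      ∀ w ∈ Krylov A (res A b (u 0)) p, ‖res A b next‖ ≤ ‖res A b (u 0 + w)‖ := by
  obtain ⟨m, rfl⟩ : ∃ m, p = m + 1 := ⟨p - 1, by omega⟩
  simp only [Nat.add_sub_cancel] at hfp hstep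
  have hu : ∀ j ≤ m, u j = (fp A b)^[j] (u 0) :=
    eq_iterate_of_forall_lt _ _ m fun j hj => by simpa using hfp (j + 1) (by omega) hj
  have hK : Submodule.span ℝ (range fun i : Fin (m + 1) => fp A b (u m) - u (m - i)) =
      Krylov A (res A b (u 0)) (m + 1) := by
    rw [← span_range_iterate_fp_sub, ← Fin.rev_surjective.range_comp]
    congr! 3 with i
    rw [Function.iterate_succ_apply', ← hu m le_rfl, Function.comp_apply, Fin.val_rev,
      show m - (m + 1 - (i + 1)) = i by omega, hu i (by omega)]
  obtain ⟨β, hmin, rfl⟩ := hstep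
  have hobj : ∀ γ, ngObj A b m u m γ =
      ‖res A b (fp A b (u m) + ∑ i, γ i • (fp A b (u m) - u (m - i)))‖ := fun γ => by
    rw [ngObj, res_add_sum_smul_sub]
  rw [← hK]
  refine ⟨(mem_span_range_sub_iff _ _ (Fin.last m) _).mpr ⟨β, ?_⟩, fun w hw => ?_⟩
  · simp
  · obtain ⟨γ, hγ⟩ := (mem_span_range_sub_iff _ _ (Fin.last m) w).mp hw
    simp only [Fin.val_last, Nat.sub_self] at hγ
    rw [hγ, ← hobj, ← hobj]
    exact hmin γ

/-- p-1 Richardson steps followed by one NGMRES(p-1) step produce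
the p-th full GMRES iterate. -/
theorem stmt_9 {n p : ℕ} (hp : 1 ≤ p) (A : Matrix (Fin n) (Fin n) ℝ) (hA : IsUnit A)
    (b : EuclideanSpace ℝ (Fin n)) (u : ℕ → EuclideanSpace ℝ (Fin n))
    (hfp : ∀ j, 1 ≤ j → j ≤ p - 1 → u j = fp A b (u (j-1)))
    (next : EuclideanSpace ℝ (Fin n)) (hstep : NGMRESStep A b (p-1) u (p-1) next) :
    (next - u 0) ∈ Krylov A (res A b (u 0)) p ∧
      ∀ w ∈ Krylov A (res A b (u 0)) p, ‖res A b next‖ ≤ ‖res A b (u 0 + w)‖ :=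
  stmt_9_general hp A b u hfp next hstep

end
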